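/- arXiv:1407.6729 — 4 statements merged into one kernel-verified Lean document; each statement's English description precedes it below -/
import Mathlib

section
/- For complex numbers $a, x, q$ with $|q| < 1$ and $|x| < 1$, we have $\frac{(ax;q)_\infty}{(x;q)_\infty} = \sum_{k=0}^{\infty} \frac{(a;q)_k}{(q;q)_k} x^k$, where $(y;q)_\infty = \prod_{i=0}^{\infty}(1 - y q^i)$ and $(y;q)_k = \prod_{i=1}^{k}(1 - y q^{i-1})$. -/
/-- The finite q-Pochhammer symbol `(x;q)_k = ∏_{i=1}^k (1 - x q^{i-1})`. -/
noncomputable def qPoch (x q : ℂ) (k : ℕ) : ℂ :=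
  ∏ i ∈ Finset.range k, (1 - x * q ^ i)

/-- The infinite q-Pochhammer symbol `(x;q)_∞ = ∏_{i=0}^∞ (1 - x q^i)`. -/
noncomputable def qPochInf (x q : ℂ) : ℂ :=
  ∏' i : ℕ, (1 - x * q ^ i)

/-!
The series `F(x) = ∑ (a;q)_k / (q;q)_k x^k` satisfies `(1 - x) F(x) = (1 - a x) F(q x)`, because
its coefficients `c_k` satisfy `c_{k+1} (1 - q^{k+1}) = c_k (1 - a q^k)`. Iterating `n` times gives
`F(x) (x;q)_n = (a x;q)_n F(q^n x)`, and letting `n → ∞` (so `q^n x → 0` and `F(q^n x) → F(0) = 1`)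
gives `F(x) (x;q)_∞ = (a x;q)_∞`.
-/

open Filter Topology Finset

noncomputable def qBinomCoeff (a q : ℂ) (k : ℕ) : ℂ := qPoch a q k / qPoch q q k

noncomputable def qBinomSeries (a q y : ℂ) : ℂ := ∑' k : ℕ, qBinomCoeff a q k * y ^ k

lemma one_sub_ne_zero_of_norm_lt_one {R : Type*} [SeminormedRing R] [NormOneClass R] {y : R}
    (hy : ‖y‖ < 1) : 1 - y ≠ 0 :=
  sub_ne_zero.2 fun h => by simp [← h] at hy

lemma norm_mul_pow_lt_one {𝕜 : Type*} [NormedDivisionRing 𝕜] {z q : 𝕜} (hz : ‖z‖ < 1)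
    (hq : ‖q‖ ≤ 1) (n : ℕ) : ‖z * q ^ n‖ < 1 := by
  rw [norm_mul, norm_pow]
  exact mul_lt_one_of_nonneg_of_lt_one_left (norm_nonneg z) hz (pow_le_one₀ (norm_nonneg q) hq)

lemma qPoch_succ (x q : ℂ) (k : ℕ) : qPoch x q (k + 1) = qPoch x q k * (1 - x * q ^ k) :=
  prod_range_succ _ _

lemma qPoch_ne_zero {x q : ℂ} (hx : ‖x‖ < 1) (hq : ‖q‖ ≤ 1) (k : ℕ) : qPoch x q k ≠ 0 :=
  prod_ne_zero_iff.2 fun i _ => one_sub_ne_zero_of_norm_lt_one (norm_mul_pow_lt_one hx hq i)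

lemma qBinomCoeff_zero (a q : ℂ) : qBinomCoeff a q 0 = 1 := by
  simp [qBinomCoeff, qPoch]

lemma qBinomCoeff_succ_mul {q : ℂ} (hq : ‖q‖ < 1) (a : ℂ) (k : ℕ) :
    qBinomCoeff a q (k + 1) * (1 - q * q ^ k) = qBinomCoeff a q k * (1 - a * q ^ k) := by
  have hk := qPoch_ne_zero hq hq.le k
  have hfactor := one_sub_ne_zero_of_norm_lt_one (norm_mul_pow_lt_one hq hq.le k)
  simp only [qBinomCoeff, qPoch_succ, div_mul_eq_mul_div]
  rw [div_eq_div_iff (mul_ne_zero hk hfactor) hk]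
  ring

lemma tendsto_one_sub_mul_pow {q : ℂ} (hq : ‖q‖ < 1) (z : ℂ) :
    Tendsto (fun k : ℕ => 1 - z * q ^ k) atTop (𝓝 1) := by
  simpa using tendsto_const_nhds.sub ((tendsto_pow_atTop_nhds_zero_of_norm_lt_one hq).const_mul z)

lemma summable_norm_qBinomCoeff_mul_pow {q : ℂ} (hq : ‖q‖ < 1) (a : ℂ) {y : ℂ} (hy : ‖y‖ < 1) :
    Summable fun k => ‖qBinomCoeff a q k * y ^ k‖ := by
  obtain ⟨r, hyr, hr⟩ := exists_between hy
  refine summable_of_ratio_norm_eventually_le hr ?_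
  have hratio : ∀ᶠ k in atTop, ‖1 - a * q ^ k‖ * ‖y‖ < r * ‖1 - q * q ^ k‖ := by
    refine ((tendsto_one_sub_mul_pow hq a).norm.mul_const _).eventually_lt
      ((tendsto_one_sub_mul_pow hq q).norm.const_mul r) ?_
    simpa using hyr
  filter_upwards [hratio] with k hk
  have hpos : 0 < ‖1 - q * q ^ k‖ :=
    norm_pos_iff.2 (one_sub_ne_zero_of_norm_lt_one (norm_mul_pow_lt_one hq hq.le k))
  have hrec := congrArg norm (qBinomCoeff_succ_mul hq a k)
  rw [norm_mul, norm_mul] at hrec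
  simp only [norm_norm, norm_mul, norm_pow]
  refine le_of_mul_le_mul_right ?_ hpos
  calc ‖qBinomCoeff a q (k + 1)‖ * ‖y‖ ^ (k + 1) * ‖1 - q * q ^ k‖
      = ‖qBinomCoeff a q k‖ * ‖y‖ ^ k * (‖1 - a * q ^ k‖ * ‖y‖) := by
        rw [pow_succ]; linear_combination ‖y‖ ^ k * ‖y‖ * hrec
    _ ≤ ‖qBinomCoeff a q k‖ * ‖y‖ ^ k * (r * ‖1 - q * q ^ k‖) := by gcongr
    _ = r * (‖qBinomCoeff a q k‖ * ‖y‖ ^ k) * ‖1 - q * q ^ k‖ := by ring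

lemma summable_qBinomCoeff_mul_pow {q : ℂ} (hq : ‖q‖ < 1) (a : ℂ) {y : ℂ} (hy : ‖y‖ < 1) :
    Summable fun k => qBinomCoeff a q k * y ^ k :=
  (summable_norm_qBinomCoeff_mul_pow hq a hy).of_norm

lemma one_sub_mul_qBinomSeries {q : ℂ} (hq : ‖q‖ < 1) (a : ℂ) {y : ℂ} (hy : ‖y‖ < 1) :
    (1 - y) * qBinomSeries a q y = (1 - a * y) * qBinomSeries a q (q * y) := by
  set c := qBinomCoeff a q
  have hS := summable_qBinomCoeff_mul_pow hq a hy
  have hT := summable_qBinomCoeff_mul_pow hq a (y := q * y)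
    (by rw [norm_mul]; exact mul_lt_one_of_nonneg_of_lt_one_left (norm_nonneg q) hq hy.le)
  -- Both sides are `∑ c_{k+1} (1 - q^{k+1}) y^{k+1}`; the `k = 0` term on the left vanishes.
  have key : ∑' k, (c k * y ^ k - c k * (q * y) ^ k)
      = y * ∑' k, (c k * y ^ k - a * (c k * (q * y) ^ k)) := by
    rw [← tsum_mul_left, (hS.sub hT).tsum_eq_zero_add]
    simp only [pow_zero, mul_one, sub_self, zero_add]
    refine tsum_congr fun k => ?_
    linear_combination y ^ (k + 1) * qBinomCoeff_succ_mul hq a k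
  rw [hS.tsum_sub hT, hS.tsum_sub (hT.mul_left a), tsum_mul_left] at key
  simp only [qBinomSeries]
  linear_combination key

lemma qBinomSeries_mul_qPoch {q : ℂ} (hq : ‖q‖ < 1) (a : ℂ) {x : ℂ} (hx : ‖x‖ < 1) (n : ℕ) :
    qBinomSeries a q x * qPoch x q n = qPoch (a * x) q n * qBinomSeries a q (q ^ n * x) := by
  induction n with
  | zero => simp [qPoch]
  | succ n ih =>
    have hfun := one_sub_mul_qBinomSeries hq a
      (by simpa [mul_comm] using norm_mul_pow_lt_one hx hq.le n : ‖q ^ n * x‖ < 1)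
    rw [show q * (q ^ n * x) = q ^ (n + 1) * x by ring] at hfun
    rw [qPoch_succ, qPoch_succ]
    linear_combination (1 - x * q ^ n) * ih + qPoch (a * x) q n * hfun

lemma tendsto_qBinomSeries_pow_mul {q : ℂ} (hq : ‖q‖ < 1) (a : ℂ) {x : ℂ} (hx : ‖x‖ < 1) :
    Tendsto (fun n : ℕ => qBinomSeries a q (q ^ n * x)) atTop (𝓝 1) := by
  have hpow := tendsto_pow_atTop_nhds_zero_of_norm_lt_one hq
  have hlim := tendsto_tsum_of_dominated_convergence (summable_norm_qBinomCoeff_mul_pow hq a hx)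
    (fun k => ((hpow.mul_const x).pow k).const_mul (qBinomCoeff a q k)) <|
    Eventually.of_forall fun n k => by
      rw [norm_mul, norm_mul, norm_pow, norm_pow, norm_mul, norm_pow]
      gcongr
      exact mul_le_of_le_one_left (norm_nonneg x) (pow_le_one₀ (norm_nonneg q) hq.le)
  have hzero : ∑' k, qBinomCoeff a q k * 0 ^ k = 1 := by
    rw [tsum_eq_single 0 fun k hk => by simp [hk], pow_zero, mul_one, qBinomCoeff_zero]
  rwa [zero_mul, hzero] at hlim

lemma summable_norm_neg_mul_pow {q : ℂ} (hq : ‖q‖ < 1) (z : ℂ) :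
    Summable fun n : ℕ => ‖-(z * q ^ n)‖ := by
  simpa only [norm_neg, norm_mul, norm_pow] using
    (summable_geometric_of_lt_one (norm_nonneg q) hq).mul_left ‖z‖

lemma tendsto_qPoch_qPochInf {q : ℂ} (hq : ‖q‖ < 1) (z : ℂ) :
    Tendsto (qPoch z q) atTop (𝓝 (qPochInf z q)) := by
  have := (multipliable_one_add_of_summable (summable_norm_neg_mul_pow hq z)).hasProd
    |>.tendsto_prod_nat
  simp_rw [← sub_eq_add_neg] at this
  exact this

lemma qPochInf_ne_zero {q : ℂ} (hq : ‖q‖ < 1) {z : ℂ} (hz : ‖z‖ < 1) : qPochInf z q ≠ 0 := by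
  have hfactor (n : ℕ) : 1 + -(z * q ^ n) ≠ 0 := by
    rw [← sub_eq_add_neg]
    exact one_sub_ne_zero_of_norm_lt_one (norm_mul_pow_lt_one hz hq.le n)
  have := tprod_one_add_ne_zero_of_summable hfactor (summable_norm_neg_mul_pow hq z)
  simp_rw [← sub_eq_add_neg] at this
  exact this

/-- The q-binomial theorem:
`(ax;q)_∞ / (x;q)_∞ = ∑_{k=0}^∞ ((a;q)_k / (q;q)_k) x^k` for `|q| < 1`, `|x| < 1`. -/
theorem q_binomial_theorem (a x q : ℂ) (hq : ‖q‖ < 1) (hx : ‖x‖ < 1) :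
    qPochInf (a * x) q / qPochInf x q = ∑' k : ℕ, qPoch a q k / qPoch q q k * x ^ k := by
  change _ = qBinomSeries a q x
  have hleft := (tendsto_qPoch_qPochInf hq x).const_mul (qBinomSeries a q x)
  have hright := (tendsto_qPoch_qPochInf hq (a * x)).mul (tendsto_qBinomSeries_pow_mul hq a hx)
  have heq : qBinomSeries a q x * qPochInf x q = qPochInf (a * x) q * 1 :=
    tendsto_nhds_unique (hleft.congr (qBinomSeries_mul_qPoch hq a hx)) hright
  rw [div_eq_iff (qPochInf_ne_zero hq hx), heq, mul_one]
end

section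
/- Let $\alpha \in \mathbb{C}$ and $N \ge 1$, with $1 - \alpha^j \neq 0$ for $1 \le j \le N$. Then the symmetrization identity $\sum_{\sigma \in S_N} \prod_{1 \le i < j \le N} \frac{1 - (\alpha+1) z_{\sigma(i)} + \alpha z_{\sigma(i)} z_{\sigma(j)}}{z_{\sigma(j)} - z_{\sigma(i)}} = \frac{(\alpha;\alpha)_N}{(1-\alpha)^N}$ holds, where $(\alpha;\alpha)_N = \prod_{i=1}^N (1-\alpha^i)$, for all tuples $(z_1,\dots,z_N)$ of distinct complex numbers for which the denominators are nonzero. -/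
/-!
Grouping the permutations by `σ 0` and inducting on `N` reduces the identity to its one-row case
`∑ₖ ∏_{m ≠ k} f(z_k, z_m) = 1 + α + ⋯ + α^(N-1)`, where `f = pairFactor α` is the factor of the
product. The substitution `u = (z - 1)/(α z - 1)` turns `f(a, b)` into `(u_a - α u_b)/(u_a - u_b)`,
and for nonzero distinct `u_k` the resulting sum is read off from the Lagrange formula for the
leading coefficient of `∏ₘ (X - α u_m)` at the nodes `u_k` and `0`. The exceptional points
`z_k = 1` and `α z_k = 1` are removed by translating `z`: the denominators `z_m - z_k` are
translation invariant, so the translated sum is a polynomial in the translation parameter.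
-/

open Finset Polynomial

theorem sum_prod_erase_sub_mul_div_sub {K : Type*} [Field K] [DecidableEq K] {S : Finset K}
    (hS : 0 ∉ S) {q : K} (hq : q ≠ 1) :
    ∑ x ∈ S, ∏ y ∈ S.erase x, (x - q * y) / (x - y) = ∑ i ∈ range #S, q ^ i := by
  set f : K[X] := Lagrange.nodal S (q * ·)
  have hf : f.degree < #(insert 0 S) := by
    rw [Lagrange.degree_nodal, card_insert_of_notMem hS]; exact_mod_cast Nat.lt_succ_self #S
  have hcoeff := Lagrange.coeff_eq_sum (v := id) (Set.injOn_id _) hf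
  rw [card_insert_of_notMem hS, Nat.add_sub_cancel, ← Lagrange.natDegree_nodal (v := (q * ·)),
    Lagrange.nodal_monic.coeff_natDegree, sum_insert hS, erase_insert hS] at hcoeff
  have hzero : f.eval 0 / ∏ y ∈ S, (0 - y) = q ^ #S := by
    rw [Lagrange.eval_nodal, ← prod_div_distrib, ← prod_const]
    refine prod_congr rfl fun y hy => ?_
    have hy0 : y ≠ 0 := ne_of_mem_of_not_mem hy hS
    field_simp
    ring
  have hnode : ∀ x ∈ S, f.eval x / ∏ y ∈ (insert 0 S).erase x, (x - y)
      = (1 - q) * ∏ y ∈ S.erase x, (x - q * y) / (x - y) := by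
    intro x hx
    have hx0 : x ≠ 0 := ne_of_mem_of_not_mem hx hS
    rw [erase_insert_of_ne hx0.symm, prod_insert (fun h => hS (mem_of_mem_erase h)),
      Lagrange.eval_nodal, ← mul_prod_erase S _ hx, prod_div_distrib]
    field_simp
    ring
  simp only [id, hzero] at hcoeff
  rw [sum_congr rfl hnode, ← mul_sum] at hcoeff
  have hgeom := geom_sum_mul q #S
  refine mul_left_cancel₀ (sub_ne_zero.mpr hq.symm) ?_
  linear_combination hgeom - hcoeff

theorem Finset.sum_prod_erase_image {ι κ R : Type*} [DecidableEq ι] [DecidableEq κ]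
    [CommSemiring R] {u : ι → κ} (hu : Function.Injective u) (s : Finset ι) (G : κ → κ → R) :
    ∑ x ∈ s.image u, ∏ y ∈ (s.image u).erase x, G x y
      = ∑ i ∈ s, ∏ j ∈ s.erase i, G (u i) (u j) := by
  rw [sum_image hu.injOn]
  refine sum_congr rfl fun i _ => ?_
  rw [← image_erase hu, prod_image hu.injOn]

def pairFactor {K : Type*} [Field K] (α a b : K) : K :=
  (1 - (α + 1) * a + α * a * b) / (b - a)

theorem mobius_ratio_eq_pairFactor {K : Type*} [Field K] {α a b : K} (hα : α ≠ 1)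
    (ha : α * a ≠ 1) (hb : α * b ≠ 1) :
    ((a - 1) / (α * a - 1) - α * ((b - 1) / (α * b - 1)))
        / ((a - 1) / (α * a - 1) - (b - 1) / (α * b - 1)) = pairFactor α a b := by
  have ha' : α * a - 1 ≠ 0 := sub_ne_zero.mpr ha
  have hb' : α * b - 1 ≠ 0 := sub_ne_zero.mpr hb
  have hα' : 1 - α ≠ 0 := sub_ne_zero.mpr hα.symm
  rw [pairFactor, ← mul_div_assoc, div_sub_div _ _ ha' hb', div_sub_div _ _ ha' hb',
    div_div_div_cancel_right₀ (mul_ne_zero ha' hb'),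
    show (a - 1) * (α * b - 1) - (α * a - 1) * (b - 1) = (1 - α) * (b - a) by ring,
    show (a - 1) * (α * b - 1) - (α * a - 1) * (α * (b - 1))
      = (1 - α) * (1 - (α + 1) * a + α * a * b) by ring,
    mul_div_mul_left _ _ hα']

section OneRow

variable {K ι : Type*} [Field K] [Fintype ι] [DecidableEq ι]

theorem sum_prod_erase_pairFactor_of_forall_ne {α : K} (hα : α ≠ 1) {z : ι → K}
    (hz : Function.Injective z) (h1 : ∀ k, z k ≠ 1) (hα' : ∀ k, α * z k ≠ 1) :
    ∑ k, ∏ m ∈ univ.erase k, pairFactor α (z k) (z m) = ∑ i ∈ range (Fintype.card ι), α ^ i := by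
  classical
  set u : ι → K := fun k => (z k - 1) / (α * z k - 1)
  have hu : Function.Injective u := by
    intro k m hkm
    have := (div_eq_div_iff (sub_ne_zero.mpr (hα' k)) (sub_ne_zero.mpr (hα' m))).mp hkm
    refine hz (mul_left_cancel₀ (sub_ne_zero.mpr hα) ?_)
    linear_combination this
  have hu0 : (0 : K) ∉ univ.image u := by
    simp only [mem_image, mem_univ, true_and, not_exists, u]
    exact fun k => div_ne_zero (sub_ne_zero.mpr (h1 k)) (sub_ne_zero.mpr (hα' k))
  have hu_row := sum_prod_erase_sub_mul_div_sub hu0 hα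
  rw [sum_prod_erase_image hu, card_image_of_injective _ hu, card_univ] at hu_row
  rw [← hu_row]
  exact sum_congr rfl fun k _ => prod_congr rfl fun m _ =>
    (mobius_ratio_eq_pairFactor hα (hα' k) (hα' m)).symm

theorem sum_prod_erase_pairFactor [Infinite K] {α : K} (hα : α ≠ 1) {z : ι → K}
    (hz : Function.Injective z) :
    ∑ k, ∏ m ∈ univ.erase k, pairFactor α (z k) (z m) = ∑ i ∈ range (Fintype.card ι), α ^ i := by
  set P : K[X] := ∑ k, ∏ m ∈ univ.erase k, C (z m - z k)⁻¹ *
    (1 - (C α + 1) * (X + C (z k)) + C α * (X + C (z k)) * (X + C (z m)))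
  have hP : ∀ t, P.eval t = ∑ k, ∏ m ∈ univ.erase k, pairFactor α (z k + t) (z m + t) := by
    intro t
    simp only [P, eval_finsetSum, eval_prod, pairFactor, add_sub_add_right_eq_sub]
    simp [div_eq_inv_mul, add_comm]
  set S : Set K := Set.range (fun k => 1 - z k) ∪ Set.range (fun k => α⁻¹ - z k)
  have hgeneric : Sᶜ ⊆ {t | P.eval t = (C (∑ i ∈ range (Fintype.card ι), α ^ i)).eval t} := by
    intro t ht
    simp only [S, Set.mem_compl_iff, Set.mem_union, Set.mem_range, not_or, not_exists] at ht
    rw [Set.mem_ofPred_eq, hP, eval_C]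
    refine sum_prod_erase_pairFactor_of_forall_ne hα ((add_left_injective t).comp hz)
      (fun k h => ht.1 k (by simp [← h])) (fun k h => ht.2 k ?_)
    rw [← eq_inv_of_mul_eq_one_right h]
    ring
  have hconst := eq_of_infinite_eval_eq P _ ((Set.finite_range _).union (Set.finite_range _)
    |>.infinite_compl.mono hgeneric)
  simpa only [hP, eval_C, add_zero] using congrArg (eval 0) hconst

end OneRow

theorem Fin.prod_filter_lt_succ {M : Type*} [CommMonoid M] {n : ℕ}
    (g : Fin (n + 1) → Fin (n + 1) → M) :
    ∏ p ∈ univ.filter (fun p : Fin (n + 1) × Fin (n + 1) => p.1 < p.2), g p.1 p.2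
      = (∏ j : Fin n, g 0 j.succ) *
        ∏ p ∈ univ.filter (fun p : Fin n × Fin n => p.1 < p.2), g p.1.succ p.2.succ := by
  simp [prod_filter, Fintype.prod_prod_type, Fin.prod_univ_succ, Fin.succ_pos]

theorem Fin.prod_erase_eq_prod_swap_succ {M : Type*} [CommMonoid M] {n : ℕ} (p : Fin (n + 1))
    (g : Fin (n + 1) → M) :
    ∏ m ∈ univ.erase p, g m = ∏ j : Fin n, g (Equiv.swap 0 p j.succ) := by
  rw [← prod_equiv (Equiv.swap 0 p) (s := univ.erase 0) (t := univ.erase p)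
    (by simp [Equiv.swap_apply_eq_iff]) (fun _ _ => rfl)]
  simp [Fin.univ_succ]

theorem sum_perm_prod_lt_eq_prod_range {β R : Type*} [CommSemiring R] (F : β → β → R)
    (c : ℕ → R) (hF : ∀ n (x : Fin n → β), Function.Injective x →
      ∑ p, ∏ m ∈ univ.erase p, F (x p) (x m) = c n)
    (n : ℕ) (x : Fin n → β) (hx : Function.Injective x) :
    ∑ σ : Equiv.Perm (Fin n), ∏ p ∈ univ.filter (fun p : Fin n × Fin n => p.1 < p.2),
      F (x (σ p.1)) (x (σ p.2)) = ∏ k ∈ range n, c (k + 1) := by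
  induction n with
  | zero => simp
  | succ n ih =>
    set rest : Fin (n + 1) → Fin n → β := fun p j => x (Equiv.swap 0 p j.succ)
    have hrest : ∀ p, Function.Injective (rest p) := fun p =>
      hx.comp ((Equiv.injective _).comp (Fin.succ_injective n))
    have hsplit : ∀ p τ, ∏ pr ∈ univ.filter (fun pr : Fin (n + 1) × Fin (n + 1) => pr.1 < pr.2),
        F (x (Equiv.Perm.decomposeFin.symm (p, τ) pr.1))
          (x (Equiv.Perm.decomposeFin.symm (p, τ) pr.2))
        = (∏ m ∈ univ.erase p, F (x p) (x m)) *
          ∏ pr ∈ univ.filter (fun pr : Fin n × Fin n => pr.1 < pr.2),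
            F (rest p (τ pr.1)) (rest p (τ pr.2)) := by
      intro p τ
      set σ := Equiv.Perm.decomposeFin.symm (p, τ) with hσ
      rw [Fin.prod_filter_lt_succ (fun i j => F (x (σ i)) (x (σ j))),
        Fin.prod_erase_eq_prod_swap_succ p, ← Equiv.prod_comp τ (fun j => F (x p) (rest p j))]
      simp only [hσ, Equiv.Perm.decomposeFin_symm_apply_zero,
        Equiv.Perm.decomposeFin_symm_apply_succ, rest]
    rw [← Equiv.Perm.decomposeFin.symm.sum_comp, Fintype.sum_prod_type]
    simp only [hsplit, ← mul_sum, fun p => ih (rest p) (hrest p), ← sum_mul, hF _ x hx,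
      prod_range_succ _ n]
    exact mul_comm _ _

/-- Symmetrization identity (Lemma 3.12 of the paper):
`∑_{σ ∈ S_N} ∏_{i<j} (1-(α+1)z_{σ(i)}+α z_{σ(i)} z_{σ(j)})/(z_{σ(j)}-z_{σ(i)})
  = (α;α)_N/(1-α)^N`. -/
theorem symmetrization_identity (N : ℕ) (hN : 1 ≤ N) (α : ℂ)
    (hα : ∀ j : ℕ, 1 ≤ j → j ≤ N → α ^ j ≠ 1)
    (z : Fin N → ℂ) (hz : Function.Injective z) :
    (∑ σ : Equiv.Perm (Fin N),
        ∏ p ∈ Finset.univ.filter (fun p : Fin N × Fin N => p.1 < p.2),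
          (1 - (α + 1) * z (σ p.1) + α * z (σ p.1) * z (σ p.2))
            / (z (σ p.2) - z (σ p.1)))
      = (∏ i ∈ Finset.range N, (1 - α ^ (i + 1))) / (1 - α) ^ N := by
  have hα1 : α ≠ 1 := by simpa using hα 1 le_rfl hN
  have hrow (n : ℕ) (x : Fin n → ℂ) (hx : Function.Injective x) :
      ∑ p, ∏ m ∈ univ.erase p, pairFactor α (x p) (x m) = (1 - α ^ n) / (1 - α) := by
    rw [← neg_div_neg_eq, neg_sub, neg_sub, ← geom_sum_eq hα1]
    simpa using sum_prod_erase_pairFactor hα1 hx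
  refine (sum_perm_prod_lt_eq_prod_range (pairFactor α) _ hrow N z hz).trans ?_
  rw [prod_div_distrib, prod_const, card_range]
end

section
/- For any complex $\alpha$ with $\prod_{i=1}^N(1-\alpha^i) \neq 0$ and pairwise distinct complex numbers $u_1,\dots,u_N$: $\sum_{\sigma \in S_N} \prod_{1 \le i < j \le N} \frac{u_{\sigma(i)} - \alpha u_{\sigma(j)}}{u_{\sigma(i)} - u_{\sigma(j)}} = \frac{(\alpha;\alpha)_N}{(1-\alpha)^N}$, where $(\alpha;\alpha)_N = \prod_{i=1}^N(1-\alpha^i)$. -/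
/-!
Expanding along the first row, `σ ↦ (σ 0, rest)`, the sum over `S_{n+1}` becomes
`∑_p ∏_{j ≠ p} (u_p - α u_j)/(u_p - u_j)` times a sum of the same shape over `S_n`, so by
induction the left-hand side is the `α`-factorial `∏_{k ≤ N} (1 + α + ⋯ + α^(k-1))`. The
first-row sum equals `1 + α + ⋯ + α^(N-1)`: this is the partial fraction expansion of
`∏_j (z - α u_j)/(z - u_j)` evaluated at `z = 0`.
-/

open Finset Polynomial Equiv Function

section Symmetrization

variable {M : Type*} {n : ℕ}

theorem prod_filter_lt_fin_succ [CommMonoid M] (f : Fin (n + 1) → Fin (n + 1) → M) :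
    ∏ q ∈ univ.filter (fun q : Fin (n + 1) × Fin (n + 1) => q.1 < q.2), f q.1 q.2
      = (∏ j : Fin n, f 0 j.succ) *
        ∏ q ∈ univ.filter (fun q : Fin n × Fin n => q.1 < q.2), f q.1.succ q.2.succ := by
  simp only [prod_filter, Fintype.prod_prod_type, Fin.prod_univ_succ, Fin.succ_pos,
    Fin.not_lt_zero, Fin.succ_lt_succ_iff, if_true, if_false, one_mul]

theorem prod_swap_succ_eq_prod_erase [CommMonoid M] (g : Fin (n + 1) → M) (p : Fin (n + 1)) :
    ∏ j : Fin n, g (swap 0 p j.succ) = ∏ i ∈ univ.erase p, g i :=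
  calc ∏ j : Fin n, g (swap 0 p j.succ) = ∏ i ∈ univ.erase 0, g (swap 0 p i) := by
        rw [Fin.univ_succ, erase_cons, prod_map]; rfl
    _ = ∏ i ∈ univ.erase p, g i :=
        prod_equiv (swap 0 p) (by simp [swap_apply_eq_iff]) (by simp)

theorem sum_perm_prod_filter_lt_succ {R : Type*} [CommSemiring M] (f : R → R → M)
    (u : Fin (n + 1) → R) :
    ∑ σ : Perm (Fin (n + 1)),
        ∏ q ∈ univ.filter (fun q : Fin (n + 1) × Fin (n + 1) => q.1 < q.2),
          f (u (σ q.1)) (u (σ q.2))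
      = ∑ p, (∏ i ∈ univ.erase p, f (u p) (u i)) *
          ∑ e : Perm (Fin n), ∏ q ∈ univ.filter (fun q : Fin n × Fin n => q.1 < q.2),
            f (u (swap 0 p (e q.1).succ)) (u (swap 0 p (e q.2).succ)) := by
  rw [← (Perm.decomposeFin (n := n)).symm.sum_comp, Fintype.sum_prod_type]
  refine sum_congr rfl fun p _ => ?_
  rw [mul_sum]
  refine sum_congr rfl fun e _ => ?_
  rw [prod_filter_lt_fin_succ (fun i j => f (u (Perm.decomposeFin.symm (p, e) i))
    (u (Perm.decomposeFin.symm (p, e) j)))]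
  simp only [Perm.decomposeFin_symm_apply_zero, Perm.decomposeFin_symm_apply_succ]
  rw [← prod_swap_succ_eq_prod_erase]
  exact congrArg (· * _) (Equiv.prod_comp e fun j => f (u p) (u (swap 0 p j.succ)))

end Symmetrization

section FirstRow

variable {K : Type*} [Field K] [DecidableEq K]

/-- Partial fractions: the divided differences of `∏_{y ∈ t} (X - α y)` over the nodes
`t ∪ {0}` sum to its leading coefficient `1`; the node `0` contributes `α ^ #t`. -/
theorem one_sub_mul_sum_prod_erase_div_add_pow (α : K) {t : Finset K} (h0 : (0 : K) ∉ t) :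
    (1 - α) * ∑ x ∈ t, ∏ y ∈ t.erase x, (x - α * y) / (x - y) + α ^ #t = 1 := by
  set F : K[X] := ∏ y ∈ t, (X - C (α * y))
  have hF : F.Monic := monic_prod_of_monic _ _ fun _ _ => monic_X_sub_C _
  have hFdeg : F.natDegree = #t := by
    rw [natDegree_prod_of_monic _ _ fun _ _ => monic_X_sub_C _]
    simp only [natDegree_X_sub_C, sum_const, smul_eq_mul, mul_one]
  have hne : ∀ y ∈ t, y ≠ 0 := fun y hy h => h0 (h ▸ hy)
  have hcard : #(insert 0 t) = #t + 1 := card_insert_of_notMem h0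
  have key := Lagrange.coeff_eq_sum (s := insert 0 t) (v := id) (Set.injOn_id _) (P := F)
    (by rw [degree_eq_natDegree hF.ne_zero, hFdeg, hcard]; exact_mod_cast Nat.lt_succ_self _)
  have hnode : F.eval 0 / ∏ y ∈ (insert 0 t).erase 0, (0 - y) = α ^ #t := by
    simp only [erase_insert h0, F, eval_prod, eval_sub, eval_X, eval_C]
    rw [div_eq_iff (prod_ne_zero_iff.2 fun y hy => sub_ne_zero.2 (hne y hy).symm),
      ← prod_const, ← prod_mul_distrib]
    exact prod_congr rfl fun _ _ => by ring
  have hterm : ∀ x ∈ t, F.eval x / ∏ y ∈ (insert 0 t).erase x, (x - y)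
      = (1 - α) * ∏ y ∈ t.erase x, (x - α * y) / (x - y) := by
    intro x hx
    have h0x : (0 : K) ∉ t.erase x := fun h => h0 (mem_of_mem_erase h)
    rw [erase_insert_of_ne (hne x hx).symm, prod_insert h0x, prod_div_distrib]
    simp only [F, ← mul_prod_erase t _ hx, eval_mul, eval_prod, eval_sub, eval_X, eval_C,
      sub_zero]
    field_simp [hne x hx]
  have hlead : F.coeff #t = 1 := hFdeg ▸ hF.coeff_natDegree
  simp only [id, hcard, Nat.add_sub_cancel, hlead, sum_insert h0, hnode] at key
  rw [sum_congr rfl hterm, ← mul_sum] at key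
  linear_combination -key

theorem sum_prod_erase_div_eq_geom_sum_of_notMem (α : K) {t : Finset K} (h0 : (0 : K) ∉ t) :
    ∑ x ∈ t, ∏ y ∈ t.erase x, (x - α * y) / (x - y) = ∑ i ∈ range #t, α ^ i := by
  rcases eq_or_ne α 1 with rfl | hα
  · have hone : ∀ x ∈ t, ∏ y ∈ t.erase x, (x - 1 * y) / (x - y) = 1 := fun x _ =>
      prod_eq_one fun y hy => by rw [one_mul, div_self (sub_ne_zero.2 (ne_of_mem_erase hy).symm)]
    rw [sum_congr rfl hone]
    simp
  refine mul_left_cancel₀ (sub_ne_zero.2 hα.symm) ?_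
  rw [mul_neg_geom_sum]
  linear_combination one_sub_mul_sum_prod_erase_div_add_pow α h0

theorem sum_prod_erase_div_eq_geom_sum (α : K) (t : Finset K) :
    ∑ x ∈ t, ∏ y ∈ t.erase x, (x - α * y) / (x - y) = ∑ i ∈ range #t, α ^ i := by
  by_cases h0 : (0 : K) ∉ t
  · exact sum_prod_erase_div_eq_geom_sum_of_notMem α h0
  rw [not_not] at h0
  set t' := t.erase 0
  have h0' : (0 : K) ∉ t' := notMem_erase 0 t
  have hne : ∀ y ∈ t', y ≠ 0 := fun y hy => ne_of_mem_erase hy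
  have hzero : ∏ y ∈ t', (0 - α * y) / (0 - y) = α ^ #t' := by
    rw [← prod_const]
    exact prod_congr rfl fun y hy => by field_simp [hne y hy]; ring
  have hrest : ∀ x ∈ t', ∏ y ∈ t.erase x, (x - α * y) / (x - y)
      = ∏ y ∈ t'.erase x, (x - α * y) / (x - y) := by
    intro x hx
    rw [← insert_erase h0, erase_insert_of_ne (hne x hx).symm,
      prod_insert fun h => h0' (mem_of_mem_erase h)]
    simp [div_self (hne x hx)]
  rw [← add_sum_erase t _ h0, sum_congr rfl hrest, hzero,
    sum_prod_erase_div_eq_geom_sum_of_notMem α h0', ← card_erase_add_one h0, sum_range_succ,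
    add_comm]

theorem sum_perm_prod_filter_lt_div_eq_prod_geom_sum (α : K) {N : ℕ} (u : Fin N → K)
    (hu : Injective u) :
    ∑ σ : Perm (Fin N), ∏ q ∈ univ.filter (fun q : Fin N × Fin N => q.1 < q.2),
        (u (σ q.1) - α * u (σ q.2)) / (u (σ q.1) - u (σ q.2))
      = ∏ k ∈ range N, ∑ i ∈ range (k + 1), α ^ i := by
  induction N with
  | zero => simp
  | succ n ih =>
    have hrest (p : Fin (n + 1)) := ih (fun j => u (swap 0 p j.succ))
      (hu.comp ((swap 0 p).injective.comp (Fin.succ_injective n)))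
    have hfirst : ∑ p, ∏ i ∈ univ.erase p, (u p - α * u i) / (u p - u i)
        = ∑ i ∈ range (n + 1), α ^ i := by
      have key := sum_prod_erase_div_eq_geom_sum α (univ.image u)
      rw [card_image_of_injective _ hu, card_univ, Fintype.card_fin, sum_image hu.injOn] at key
      rw [← key]
      refine sum_congr rfl fun p _ => ?_
      rw [← image_erase hu, prod_image hu.injOn]
    refine (sum_perm_prod_filter_lt_succ (fun x y => (x - α * y) / (x - y)) u).trans ?_
    rw [sum_congr rfl fun p _ => congrArg _ (hrest p), ← sum_mul, hfirst, prod_range_succ,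
      mul_comm]

end FirstRow

/-- Macdonald's symmetrization identity (Chapter III, (1.4)):
`∑_{σ ∈ S_N} ∏_{i<j} (u_{σ(i)} - α u_{σ(j)})/(u_{σ(i)} - u_{σ(j)}) = (α;α)_N/(1-α)^N`. -/
theorem macdonald_symmetrization (N : ℕ) (α : ℂ)
    (hα : (∏ i ∈ Finset.range N, (1 - α ^ (i + 1))) ≠ 0)
    (u : Fin N → ℂ) (hu : Function.Injective u) :
    (∑ σ : Equiv.Perm (Fin N),
        ∏ p ∈ Finset.univ.filter (fun p : Fin N × Fin N => p.1 < p.2),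
          (u (σ p.1) - α * u (σ p.2)) / (u (σ p.1) - u (σ p.2)))
      = (∏ i ∈ Finset.range N, (1 - α ^ (i + 1))) / (1 - α) ^ N := by
  have hfactor : ∏ i ∈ range N, (1 - α ^ (i + 1))
      = (1 - α) ^ N * ∏ k ∈ range N, ∑ i ∈ range (k + 1), α ^ i := by
    rw [← card_range N, ← prod_const, card_range, ← prod_mul_distrib]
    exact prod_congr rfl fun i _ => (mul_neg_geom_sum α (i + 1)).symm
  rw [sum_perm_prod_filter_lt_div_eq_prod_geom_sum α u hu, hfactor,
    mul_div_cancel_left₀ _ (left_ne_zero_of_mul (hfactor ▸ hα))]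
end

section
/- Let $\{f_n\}_{n\ge 1}$ be functions $\mathbb{R}\to[0,1]$, each strictly decreasing, with $\lim_{x\to-\infty} f_n(x) = 1$ and $\lim_{x\to+\infty} f_n(x) = 0$, and such that for each $\delta > 0$, $f_n \to \mathbf{1}(x \le 0)$ uniformly on $\mathbb{R}\setminus[-\delta,\delta]$. Define $f_n^r(x) = f_n(x - r)$. Let $X_n$ be real random variables such that for every $r \in \mathbb{R}$, $\mathbb{E}[f_n^r(X_n)] \to p(r)$ as $n \to \infty$, where $p$ is a continuous probability distribution function. Then $X_n$ converges in distribution to the random variable with distribution function $p$. -/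
open MeasureTheory Filter Topology

/-! If `f n` is uniformly close to the step `𝟙(x ≤ 0)` away from `[-δ, δ]`, then the shifted
functions `f n (· - (r + δ))` and `f n (· - (r - δ))` sandwich the step `𝟙(x ≤ r)` up to an
error `ε`. Taking expectations, `P(X n ≤ r)` lies between the limits `p (r - δ)` and `p (r + δ)`
up to small errors, and continuity of `p` at `r` closes the gap. -/

lemma tendsto_of_eventually_between_shifts {ι : Type*} {l : Filter ι} {a : ι → ℝ}
    {b : ι → ℝ → ℝ} {p : ℝ → ℝ} {r : ℝ} (hp : ContinuousAt p r)
    (hb : ∀ s, Tendsto (fun i => b i s) l (𝓝 (p s)))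
    (hab : ∀ δ > 0, ∀ ε > 0, ∀ᶠ i in l, b i (r - δ) - ε ≤ a i ∧ a i ≤ b i (r + δ) + ε) :
    Tendsto a l (𝓝 (p r)) := by
  rw [Metric.tendsto_nhds]
  intro ε hε
  obtain ⟨δ, hδ, hpδ⟩ := Metric.continuousAt_iff.mp hp (ε / 3) (by positivity)
  have hp_near : ∀ s, |s - r| < δ → |p s - p r| < ε / 3 := fun s hs => hpδ hs
  have hp_lo := hp_near (r - δ / 2) (by rw [abs_lt]; constructor <;> linarith)
  have hp_hi := hp_near (r + δ / 2) (by rw [abs_lt]; constructor <;> linarith)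
  have hb_lo := Metric.tendsto_nhds.mp (hb (r - δ / 2)) (ε / 3) (by positivity)
  have hb_hi := Metric.tendsto_nhds.mp (hb (r + δ / 2)) (ε / 3) (by positivity)
  filter_upwards [hab (δ / 2) (by positivity) (ε / 3) (by positivity), hb_lo, hb_hi]
    with i ⟨h_lo, h_hi⟩ hb_lo hb_hi
  rw [Real.dist_eq] at hb_lo hb_hi ⊢
  rw [abs_lt] at hp_lo hp_hi hb_lo hb_hi ⊢
  constructor <;> linarith [hp_lo.1, hp_hi.2, hb_lo.1, hb_hi.2]

lemma shift_sub_le_step_le_shift_add {g : ℝ → ℝ} (hg : ∀ x, g x ∈ Set.Icc (0 : ℝ) 1)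
    {δ ε : ℝ} (hδ : 0 ≤ δ)
    (hclose : ∀ x, δ ≤ |x| → dist (if x ≤ 0 then (1 : ℝ) else 0) (g x) < ε) (x r : ℝ) :
    g (x - (r - δ)) - ε ≤ (if x ≤ r then 1 else 0) ∧
      (if x ≤ r then (1 : ℝ) else 0) ≤ g (x - (r + δ)) + ε := by
  have hε : 0 < ε := (dist_nonneg).trans_lt (hclose δ (le_abs_self δ))
  by_cases hx : x ≤ r
  · have hfar : δ ≤ |x - (r + δ)| := by rw [abs_of_nonpos (by linarith)]; linarith
    have hnear := hclose _ hfar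
    rw [if_pos (by linarith), Real.dist_eq, abs_lt] at hnear
    simp only [if_pos hx]
    constructor <;> linarith [(hg (x - (r - δ))).2, hnear.2]
  · have hrx := not_le.mp hx
    have hfar : δ ≤ |x - (r - δ)| := by rw [abs_of_pos (by linarith)]; linarith
    have hnear := hclose _ hfar
    rw [if_neg (by linarith), Real.dist_eq, abs_lt] at hnear
    simp only [if_neg hx]
    constructor <;> linarith [(hg (x - (r + δ))).1, hnear.1]

section Probability

variable {Ω : Type*} [MeasurableSpace Ω] {μ : Measure Ω}

lemma integral_le_integral_add_const [IsProbabilityMeasure μ] {g h : Ω → ℝ} {c : ℝ}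
    (hg : Integrable g μ) (hh : Integrable h μ) (hle : ∀ ω, g ω ≤ h ω + c) :
    ∫ ω, g ω ∂μ ≤ ∫ ω, h ω ∂μ + c :=
  calc ∫ ω, g ω ∂μ ≤ ∫ ω, (h ω + c) ∂μ := integral_mono hg (hh.add (integrable_const c)) hle
    _ = ∫ ω, h ω ∂μ + c := by
      rw [integral_add hh (integrable_const c), integral_const, probReal_univ, one_smul]

lemma integrable_comp_of_mem_Icc [IsFiniteMeasure μ] {Y : Ω → ℝ} (hY : Measurable Y)
    {g : ℝ → ℝ} (hg_meas : Measurable g) (hg : ∀ x, g x ∈ Set.Icc (0 : ℝ) 1) :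
    Integrable (fun ω => g (Y ω)) μ :=
  .of_bound (hg_meas.comp hY).aestronglyMeasurable 1 <| .of_forall fun ω => by
    rw [Real.norm_eq_abs, abs_le]
    exact ⟨by linarith [(hg (Y ω)).1], (hg (Y ω)).2⟩

lemma measureReal_le_eq_integral {Y : Ω → ℝ} (hY : Measurable Y) (r : ℝ) :
    μ.real {ω | Y ω ≤ r} = ∫ ω, (if Y ω ≤ r then (1 : ℝ) else 0) ∂μ := by
  rw [← integral_indicator_one (measurableSet_le hY measurable_const)]
  rfl

lemma integral_shift_sub_le_measureReal_le_integral_shift_add [IsProbabilityMeasure μ]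
    {Y : Ω → ℝ} (hY : Measurable Y) {g : ℝ → ℝ} (hg_meas : Measurable g)
    (hg : ∀ x, g x ∈ Set.Icc (0 : ℝ) 1) {δ ε : ℝ} (hδ : 0 ≤ δ)
    (hclose : ∀ x, δ ≤ |x| → dist (if x ≤ 0 then (1 : ℝ) else 0) (g x) < ε) (r : ℝ) :
    ∫ ω, g (Y ω - (r - δ)) ∂μ - ε ≤ μ.real {ω | Y ω ≤ r} ∧
      μ.real {ω | Y ω ≤ r} ≤ ∫ ω, g (Y ω - (r + δ)) ∂μ + ε := by
  have hint : ∀ s, Integrable (fun ω => g (Y ω - s)) μ := fun s =>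
    integrable_comp_of_mem_Icc (hY.sub_const s) hg_meas hg
  have hstep : Integrable (fun ω => if Y ω ≤ r then (1 : ℝ) else 0) μ :=
    integrable_comp_of_mem_Icc hY (g := fun x => if x ≤ r then (1 : ℝ) else 0)
      (Measurable.ite measurableSet_Iic measurable_const measurable_const)
      (fun x => by split_ifs <;> norm_num)
  rw [measureReal_le_eq_integral hY, sub_le_iff_le_add]
  exact ⟨integral_le_integral_add_const (hint _) hstep
      fun ω => sub_le_iff_le_add.mp (shift_sub_le_step_le_shift_add hg hδ hclose (Y ω) r).1,
    integral_le_integral_add_const hstep (hint _)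
      fun ω => (shift_sub_le_step_le_shift_add hg hδ hclose (Y ω) r).2⟩

end Probability

theorem smoothed_indicator_convergence_general
    (Ω : ℕ → Type*) [∀ n, MeasurableSpace (Ω n)]
    (μ : ∀ n, Measure (Ω n)) [∀ n, IsProbabilityMeasure (μ n)]
    (X : ∀ n, Ω n → ℝ) (hX : ∀ n, Measurable (X n))
    (f : ℕ → ℝ → ℝ)
    (hf01 : ∀ n x, f n x ∈ Set.Icc (0 : ℝ) 1)
    (hanti : ∀ n, StrictAnti (f n))
    (hunif : ∀ δ : ℝ, 0 < δ →
      TendstoUniformlyOn f (fun x => if x ≤ 0 then (1 : ℝ) else 0) atTop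
        {x : ℝ | δ ≤ |x|})
    (p : ℝ → ℝ) (hp_cont : Continuous p)
    (hconv : ∀ r : ℝ,
      Tendsto (fun n => ∫ ω, f n (X n ω - r) ∂(μ n)) atTop (nhds (p r))) :
    ∀ r : ℝ,
      Tendsto (fun n => ((μ n) {ω | X n ω ≤ r}).toReal) atTop (nhds (p r)) := by
  intro r
  refine tendsto_of_eventually_between_shifts hp_cont.continuousAt hconv ?_
  intro δ hδ ε hε
  filter_upwards [Metric.tendstoUniformlyOn_iff.mp (hunif δ hδ) ε hε] with n hclose
  exact integral_shift_sub_le_measureReal_le_integral_shift_add (hX n)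
    (hanti n).antitone.measurable (hf01 n) hδ.le hclose r

/-- Lemma 5.2 of the paper (Lemma 4.1.39 of Borodin–Corwin): convergence of
expectations of shifted smoothed indicators implies convergence in distribution. -/
theorem smoothed_indicator_convergence
    (Ω : ℕ → Type*) [∀ n, MeasurableSpace (Ω n)]
    (μ : ∀ n, Measure (Ω n)) [∀ n, IsProbabilityMeasure (μ n)]
    (X : ∀ n, Ω n → ℝ) (hX : ∀ n, Measurable (X n))
    (f : ℕ → ℝ → ℝ)
    (hf01 : ∀ n x, f n x ∈ Set.Icc (0 : ℝ) 1)
    (hanti : ∀ n, StrictAnti (f n))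
    (hbot : ∀ n, Tendsto (f n) atBot (nhds 1))
    (htop : ∀ n, Tendsto (f n) atTop (nhds 0))
    (hunif : ∀ δ : ℝ, 0 < δ →
      TendstoUniformlyOn f (fun x => if x ≤ 0 then (1 : ℝ) else 0) atTop
        {x : ℝ | δ ≤ |x|})
    (p : ℝ → ℝ) (hp_cont : Continuous p) (hp_mono : Monotone p)
    (hp0 : Tendsto p atBot (nhds 0)) (hp1 : Tendsto p atTop (nhds 1))
    (hconv : ∀ r : ℝ,
      Tendsto (fun n => ∫ ω, f n (X n ω - r) ∂(μ n)) atTop (nhds (p r))) :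
    ∀ r : ℝ,
      Tendsto (fun n => ((μ n) {ω | X n ω ≤ r}).toReal) atTop (nhds (p r)) :=
  smoothed_indicator_convergence_general Ω μ X hX f hf01 hanti hunif p hp_cont hconv
end
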